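/- Let X be a simple, connected, 3-edge-connected graph and G ≤ Aut(X) a subgroup acting semiregularly on both darts and vertices. Then the canonical homomorphism Θ: Aut(X) → Aut(Jac(X)) restricts to an injection on G; in particular Θ(G) ≅ G. -/

import Mathlib

/-- A multigraph in the dart model: a finite nonempty set of darts, an involution
reversing darts, and an incidence map assigning to each dart its initial vertex.
Semiedges (fixed darts), loops and parallel edges are allowed. -/
structure Multigraph where
  D : Type
  V : Type
  instFintypeD : Fintype D
  instDecEqD : DecidableEq D
  instNonemptyD : Nonempty D
  instFintypeV : Fintype V
  instDecEqV : DecidableEq V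
  inv : D → D
  inv_inv : ∀ x, inv (inv x) = x
  vtx : D → V
  vtx_surj : Function.Surjective vtx

attribute [instance] Multigraph.instFintypeD Multigraph.instDecEqD
  Multigraph.instNonemptyD Multigraph.instFintypeV Multigraph.instDecEqV

namespace Multigraph

variable (X : Multigraph)

/-- The darts emanating from a vertex. -/
def dartsAt (v : X.V) : Finset X.D := Finset.univ.filter (fun x => X.vtx x = v)

/-- One step along a dart belonging to the set `P` of allowed darts. -/
def step (P : Set X.D) (u v : X.V) : Prop :=
  ∃ x, x ∈ P ∧ X.vtx x = u ∧ X.vtx (X.inv x) = v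

/-- Any two vertices are joined by a walk using only darts from `P`. -/
def PreconnectedOn (P : Set X.D) : Prop :=
  ∀ u v : X.V, Relation.ReflTransGen (X.step P) u v

/-- A multigraph is connected if any two vertices are joined by a walk. -/
def Connected : Prop := X.PreconnectedOn Set.univ

/-- Number of edges in an inv-closed set of darts (semiedges count once). -/
def edgeCount (S : Finset X.D) : ℕ :=
  (S.card + (S.filter (fun x => X.inv x = x)).card) / 2

/-- A spanning tree: an inv-closed set of darts which connects all vertices and
has exactly `|V| - 1` edges. -/
def IsSpanningTree (S : Finset X.D) : Prop :=
  (∀ x ∈ S, X.inv x ∈ S) ∧ X.PreconnectedOn ↑S ∧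
    X.edgeCount S = Fintype.card X.V - 1

/-- The number of spanning trees. -/
noncomputable def tau : ℕ := Nat.card {S : Finset X.D // X.IsSpanningTree S}

/-- A simple graph: no loops, no semiedges, no parallel edges. -/
def Simple : Prop :=
  (∀ x, X.vtx x ≠ X.vtx (X.inv x)) ∧
  (∀ x y, X.vtx x = X.vtx y → X.vtx (X.inv x) = X.vtx (X.inv y) → x = y)

/-- `X` is at least `k`-edge-connected: removing fewer than `k` edges
leaves it connected. -/
def EdgeConnectedGE (k : ℕ) : Prop :=
  ∀ S : Finset X.D, (∀ x ∈ S, X.inv x ∈ S) → X.edgeCount S < k →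
    X.PreconnectedOn (↑S)ᶜ

/-- The automorphism group of a multigraph, as a subgroup of the permutations
of the darts: permutations commuting with the dart-reversing involution and
preserving the partition of darts into vertices. -/
def autGroup : Subgroup (Equiv.Perm X.D) where
  carrier := {f | (∀ x, f (X.inv x) = X.inv (f x)) ∧
    ∀ x y, X.vtx x = X.vtx y ↔ X.vtx (f x) = X.vtx (f y)}
  one_mem' := ⟨fun _ => rfl, fun _ _ => Iff.rfl⟩
  mul_mem' := by
    rintro f g ⟨hf1, hf2⟩ ⟨hg1, hg2⟩
    refine ⟨fun x => ?_, fun x y => ?_⟩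
    · simp [Equiv.Perm.mul_apply, hg1, hf1]
    · simp only [Equiv.Perm.mul_apply]
      exact (hg2 x y).trans (hf2 (g x) (g y))
  inv_mem' := by
    rintro f ⟨hf1, hf2⟩
    refine ⟨fun x => f.injective ?_, fun x y => ?_⟩
    · rw [show ∀ y, f (f⁻¹ y) = y from fun y => f.apply_symm_apply y, hf1,
        show ∀ y, f (f⁻¹ y) = y from fun y => f.apply_symm_apply y]
    · have := hf2 (f⁻¹ x) (f⁻¹ y)
      simpa [show ∀ y, f (f⁻¹ y) = y from fun y => f.apply_symm_apply y] using this.symm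

end Multigraph

/-- A covering of multigraphs: a surjective graph homomorphism restricting to a
bijection on the darts at each vertex. -/
structure Covering (X Y : Multigraph) where
  toFun : X.D → Y.D
  surj : Function.Surjective toFun
  map_inv : ∀ x, toFun (X.inv x) = Y.inv (toFun x)
  map_vtx : ∀ x y, X.vtx x = X.vtx y → Y.vtx (toFun x) = Y.vtx (toFun y)
  loc_inj : ∀ x y, X.vtx x = X.vtx y → toFun x = toFun y → x = y
  loc_surj : ∀ x z, Y.vtx z = Y.vtx (toFun x) →
    ∃ y, X.vtx y = X.vtx x ∧ toFun y = z

namespace Covering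

variable {X Y : Multigraph} (ψ : Covering X Y)

/-- The covering is `n`-fold: every fibre has cardinality `n`. -/
def IsNFold (n : ℕ) : Prop := ∀ z : Y.D, Nat.card {x : X.D // ψ.toFun x = z} = n

/-- The group of covering transformations: automorphisms `f` of `X`
with `ψ ∘ f = ψ`. -/
def CT : Subgroup (Equiv.Perm X.D) where
  carrier := {f | f ∈ X.autGroup ∧ ∀ x, ψ.toFun (f x) = ψ.toFun x}
  one_mem' := ⟨X.autGroup.one_mem, fun _ => rfl⟩
  mul_mem' := by
    rintro f g ⟨hf1, hf2⟩ ⟨hg1, hg2⟩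
    exact ⟨X.autGroup.mul_mem hf1 hg1, fun x => by
      simp [Equiv.Perm.mul_apply, hf2, hg2]⟩
  inv_mem' := by
    rintro f ⟨hf1, hf2⟩
    refine ⟨X.autGroup.inv_mem hf1, fun x => ?_⟩
    conv_rhs => rw [← show f (f⁻¹ x) = x from f.apply_symm_apply x]
    rw [hf2]

/-- The covering is regular: the covering transformations act transitively
(hence regularly) on every fibre. -/
def IsRegular : Prop :=
  ∀ x y, ψ.toFun x = ψ.toFun y → ∃ f ∈ ψ.CT, f x = y

end Covering
namespace Multigraph

variable (X : Multigraph)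

/-- The family `c : Fin n → X.D` of darts is an oriented (simple) cycle:
consecutive darts are incident (cyclically) and the visited vertices are
pairwise distinct. A single semiedge or loop is a cycle. -/
def IsCycleVec {n : ℕ} (hn : 0 < n) (c : Fin n → X.D) : Prop :=
  (∀ i : Fin n,
    X.vtx (X.inv (c i)) = X.vtx (c ⟨(i.1 + 1) % n, Nat.mod_lt _ hn⟩)) ∧
  Function.Injective fun i => X.vtx (c i)

/-- The defining relations of the Jacobian inside the free abelian group on
the darts: antisymmetry relations, vertex (Kirchhoff) relations and cycle
(Kirchhoff) relations. -/
def jacRels : Set (FreeAbelianGroup X.D) :=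
  {a | ∃ x, a = FreeAbelianGroup.of x + FreeAbelianGroup.of (X.inv x)} ∪
  {a | ∃ v, a = ∑ x ∈ X.dartsAt v, FreeAbelianGroup.of x} ∪
  {a | ∃ (n : ℕ) (hn : 0 < n) (c : Fin n → X.D), X.IsCycleVec hn c ∧
    a = ∑ i, FreeAbelianGroup.of (c i)}

/-- The Jacobian of a graph: the universal abelian group admitting a harmonic
flow on `X`, presented as the free abelian group on the darts modulo the
antisymmetry, vertex and cycle relations. -/
def jac : Type := FreeAbelianGroup X.D ⧸ AddSubgroup.closure X.jacRels

instance : AddCommGroup X.jac :=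
  QuotientAddGroup.Quotient.addCommGroup (AddSubgroup.closure X.jacRels)

/-- The canonical harmonic `J`-flow `D(X) → Jac(X)`. -/
def jflow (x : X.D) : X.jac := QuotientAddGroup.mk (FreeAbelianGroup.of x)

/-- A harmonic `A`-flow on `X`: an antisymmetric function on darts whose values
generate `A` and which satisfies both Kirchhoff laws. -/
structure IsHarmonicFlow {A : Type} [AddCommGroup A] (ν : X.D → A) : Prop where
  antisym : ∀ x, ν (X.inv x) = - ν x
  gen : AddSubgroup.closure (Set.range ν) = ⊤
  klv : ∀ v, ∑ x ∈ X.dartsAt v, ν x = 0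
  klc : ∀ {n : ℕ} (hn : 0 < n) (c : Fin n → X.D), X.IsCycleVec hn c →
    ∑ i, ν (c i) = 0

end Multigraph

namespace ThetaAux

variable (X : Multigraph)

/-- indicator difference vector of a dart -/
def dvec (x : X.D) : X.V → ℤ := fun u =>
  (if u = X.vtx x then 1 else 0) - (if u = X.vtx (X.inv x) then 1 else 0)

lemma dvec_inv (x : X.D) : dvec X (X.inv x) = - dvec X x := by
  funext u
  simp only [dvec, X.inv_inv, Pi.neg_apply]
  ring

/-- inversion as a permutation of darts -/
def invPerm : Equiv.Perm X.D := Function.Involutive.toPerm X.inv X.inv_inv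

lemma sum_comp_inv {A : Type*} [AddCommMonoid A] (g : X.D → A) :
    ∑ x : X.D, g (X.inv x) = ∑ x : X.D, g x :=
  Equiv.sum_comp (invPerm X) g

lemma pair_dvec (φ : X.V → ℤ) (x : X.D) :
    ∑ u : X.V, φ u * dvec X x u = φ (X.vtx x) - φ (X.vtx (X.inv x)) := by
  simp [dvec, mul_sub, mul_ite, Finset.sum_sub_distrib, Finset.sum_ite_eq']

lemma sum_dvec_apply (u : X.V) : ∑ x : X.D, dvec X x u = 0 := by
  have h : ∑ x : X.D, (if u = X.vtx (X.inv x) then (1:ℤ) else 0)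
      = ∑ x : X.D, (if u = X.vtx x then (1:ℤ) else 0) :=
    sum_comp_inv X (fun x => if u = X.vtx x then (1:ℤ) else 0)
  simp only [dvec, Finset.sum_sub_distrib, h, sub_self]

/-- the "Laplacian-like" operator whose range is the subgroup of vertex relations -/
def Mop : (X.V → ℤ) →+ (X.V → ℤ) where
  toFun ψ := fun u => ∑ x : X.D, ψ (X.vtx x) * dvec X x u
  map_zero' := by funext u; simp
  map_add' ψ χ := by
    funext u
    simp [add_mul, Finset.sum_add_distrib]

lemma pair_Mop (φ : X.V → ℤ) :
    ∑ u : X.V, φ u * Mop X φ u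
      = ∑ x : X.D, φ (X.vtx x) * (φ (X.vtx x) - φ (X.vtx (X.inv x))) := by
  simp only [Mop, AddMonoidHom.coe_mk, ZeroHom.coe_mk]
  simp only [Finset.mul_sum]
  rw [Finset.sum_comm]
  refine Finset.sum_congr rfl (fun x _ => ?_)
  rw [← pair_dvec X φ x, Finset.mul_sum]
  refine Finset.sum_congr rfl (fun u _ => ?_)
  ring
lemma energy (φ : X.V → ℤ) :
    ∑ x : X.D, (φ (X.vtx x) - φ (X.vtx (X.inv x)))^2
      = 2 * ∑ u : X.V, φ u * Mop X φ u := by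
  rw [pair_Mop]
  have h : ∑ x : X.D, φ (X.vtx (X.inv x)) * (φ (X.vtx (X.inv x)) - φ (X.vtx x))
      = ∑ x : X.D, φ (X.vtx x) * (φ (X.vtx x) - φ (X.vtx (X.inv x))) := by
    have := sum_comp_inv X
      (fun x => φ (X.vtx x) * (φ (X.vtx x) - φ (X.vtx (X.inv x))))
    simpa [X.inv_inv] using this
  calc ∑ x : X.D, (φ (X.vtx x) - φ (X.vtx (X.inv x)))^2
      = ∑ x : X.D, (φ (X.vtx x) * (φ (X.vtx x) - φ (X.vtx (X.inv x)))
          + φ (X.vtx (X.inv x)) * (φ (X.vtx (X.inv x)) - φ (X.vtx x))) := by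
        refine Finset.sum_congr rfl (fun x _ => ?_); ring
    _ = 2 * ∑ x : X.D, φ (X.vtx x) * (φ (X.vtx x) - φ (X.vtx (X.inv x))) := by
        rw [Finset.sum_add_distrib, h]; ring

lemma int_self_le_sq (s : ℤ) : s ≤ s^2 := by
  rcases le_or_gt s 0 with h | h
  · nlinarith [sq_nonneg s]
  · nlinarith

lemma noSemi (hsimple : X.Simple) (x : X.D) : X.inv x ≠ x := by
  intro h
  exact hsimple.1 x (by rw [h])

/-- constancy of a potential along a preconnected dart set on which it does not vary -/
lemma const_of_preconnected (φ : X.V → ℤ) (P : Set X.D)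
    (hP : X.PreconnectedOn P)
    (h0 : ∀ x ∈ P, φ (X.vtx x) = φ (X.vtx (X.inv x))) :
    ∀ u v : X.V, φ u = φ v := by
  intro u v
  induction hP u v with
  | refl => rfl
  | tail _ step ih =>
    obtain ⟨x, hxP, hx1, hx2⟩ := step
    rw [ih, ← hx1, h0 x hxP, hx2]

/-- the variation of a potential along a dart -/
def Fd (φ : X.V → ℤ) (x : X.D) : ℤ := φ (X.vtx x) - φ (X.vtx (X.inv x))

lemma Fd_inv (φ : X.V → ℤ) (x : X.D) : Fd X φ (X.inv x) = - Fd X φ x := by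
  simp [Fd, X.inv_inv]

lemma energy' (φ : X.V → ℤ) :
    ∑ x : X.D, (Fd X φ x)^2 = 2 * ∑ u : X.V, φ u * Mop X φ u := by
  unfold Fd; exact energy X φ

lemma pair_dvec_sub (φ : X.V → ℤ) (p q : X.D) :
    ∑ u : X.V, φ u * (dvec X p - dvec X q) u = Fd X φ p - Fd X φ q := by
  simp only [Pi.sub_apply, mul_sub, Finset.sum_sub_distrib, pair_dvec]
  rfl

/-- darts along which the potential varies -/
def varS (φ : X.V → ℤ) : Finset X.D := Finset.univ.filter (fun x => Fd X φ x ≠ 0)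

lemma card_varS_le (φ : X.V → ℤ) (n : ℤ) (h : ∑ x : X.D, (Fd X φ x)^2 ≤ n) :
    ((varS X φ).card : ℤ) ≤ n := by
  have h1 : ∀ x ∈ varS X φ, (1:ℤ) ≤ (Fd X φ x)^2 := by
    intro x hx
    have h2 : Fd X φ x ≠ 0 := (Finset.mem_filter.mp hx).2
    have h3 := Int.one_le_abs h2
    nlinarith [sq_abs (Fd X φ x)]
  calc ((varS X φ).card : ℤ) = ∑ _x ∈ varS X φ, (1:ℤ) := by simp
    _ ≤ ∑ x ∈ varS X φ, (Fd X φ x)^2 := Finset.sum_le_sum h1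
    _ ≤ ∑ x : X.D, (Fd X φ x)^2 := Finset.sum_le_sum_of_subset_of_nonneg
        (Finset.subset_univ _) (fun i _ _ => sq_nonneg _)
    _ ≤ n := h

lemma Mop_eq_zero (hsimple : X.Simple) (h3 : X.EdgeConnectedGE 3)
    (φ : X.V → ℤ) (hcard : (varS X φ).card ≤ 5) : Mop X φ = 0 := by
  have hinv : ∀ x ∈ varS X φ, X.inv x ∈ varS X φ := by
    intro x hx
    have h2 : Fd X φ x ≠ 0 := (Finset.mem_filter.mp hx).2
    refine Finset.mem_filter.mpr ⟨Finset.mem_univ _, ?_⟩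
    rw [Fd_inv]; exact neg_ne_zero.mpr h2
  have hedge : X.edgeCount (varS X φ) < 3 := by
    have hemp : (varS X φ).filter (fun x => X.inv x = x) = ∅ :=
      Finset.filter_eq_empty_iff.mpr (fun x _ => noSemi X hsimple x)
    unfold Multigraph.edgeCount
    rw [hemp]
    simp only [Finset.card_empty, Nat.add_zero]
    omega
  have hpre := h3 (varS X φ) hinv hedge
  have hc : ∀ x ∈ (↑(varS X φ) : Set X.D)ᶜ, φ (X.vtx x) = φ (X.vtx (X.inv x)) := by
    intro x hx
    have h2 : x ∉ varS X φ := by simpa using hx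
    have h3' : ¬ (Fd X φ x ≠ 0) := fun hne =>
      h2 (Finset.mem_filter.mpr ⟨Finset.mem_univ _, hne⟩)
    have h4 : Fd X φ x = 0 := not_not.mp h3'
    exact sub_eq_zero.mp h4
  have hconst := const_of_preconnected X φ _ hpre hc
  funext u
  show ∑ x : X.D, φ (X.vtx x) * dvec X x u = 0
  calc ∑ x : X.D, φ (X.vtx x) * dvec X x u
      = ∑ x : X.D, φ u * dvec X x u :=
        Finset.sum_congr rfl (fun x _ => by rw [hconst (X.vtx x) u])
    _ = φ u * ∑ x : X.D, dvec X x u := by rw [Finset.mul_sum]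
    _ = 0 := by rw [sum_dvec_apply, mul_zero]

lemma dvec_eq_imp (hsimple : X.Simple) (p q : X.D)
    (h : dvec X p = dvec X q) : p = q := by
  have hp := hsimple.1 p
  have hq := hsimple.1 q
  have h1 := congrFun h (X.vtx p)
  have h2 := congrFun h (X.vtx (X.inv p))
  simp only [dvec, if_pos rfl] at h1 h2
  rw [if_neg hp] at h1
  rw [if_neg (fun hh => hp hh.symm)] at h2
  have hv1 : X.vtx p = X.vtx q := by
    by_contra hne
    rw [if_neg hne] at h1
    split_ifs at h1 <;> omega
  have hv2 : X.vtx (X.inv p) = X.vtx (X.inv q) := by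
    by_contra hne
    rw [if_neg hne] at h2
    split_ifs at h2 <;> omega
  exact hsimple.2 p q hv1 hv2

lemma key (hsimple : X.Simple) (h3 : X.EdgeConnectedGE 3) (p q : X.D)
    (φ : X.V → ℤ) (hφ : Mop X φ = dvec X p - dvec X q) : p = q := by
  have hQ : ∑ x : X.D, (Fd X φ x)^2 = 2 * (Fd X φ p - Fd X φ q) := by
    rw [energy' X φ, hφ, pair_dvec_sub]
  have hcard : (varS X φ).card ≤ 5 := by
    by_cases hpq : p = q
    · -- then Fd p = Fd q and the energy is 0
      have h0 : ∑ x : X.D, (Fd X φ x)^2 = 0 := by rw [hQ, hpq]; ring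
      have := card_varS_le X φ 0 (le_of_eq h0)
      omega
    by_cases hpiq : p = X.inv q
    · -- q = inv p, so Fd q = - Fd p
      have hqip : q = X.inv p := by rw [hpiq, X.inv_inv]
      have hFq : Fd X φ q = - Fd X φ p := by rw [hqip, Fd_inv]
      set s : ℤ := Fd X φ p with hs
      have hQ4 : ∑ x : X.D, (Fd X φ x)^2 = 4 * s := by rw [hQ, hFq]; ring
      have hne : p ≠ q := fun h => noSemi X hsimple q (by rw [← hpiq, h])
      have hsum2 : ∑ x ∈ ({p, q} : Finset X.D), (Fd X φ x)^2 = 2 * s^2 := by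
        rw [Finset.sum_pair hne, hFq]; ring
      have hle : 2 * s^2 ≤ 4 * s := by
        rw [← hsum2, ← hQ4]
        exact Finset.sum_le_sum_of_subset_of_nonneg (Finset.subset_univ _)
          (fun i _ _ => sq_nonneg _)
      have hs0 : 0 ≤ s := by nlinarith
      have hs2 : s ≤ 2 := by nlinarith
      rcases lt_or_eq_of_le hs2 with hs1 | hs1
      · have := card_varS_le X φ 4 (by rw [hQ4]; omega)
        omega
      · -- s = 2 : all variation is on {p, q}
        have hrest : ∑ x ∈ Finset.univ \ ({p, q} : Finset X.D), (Fd X φ x)^2 = 0 := by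
          rw [Finset.sum_sdiff_eq_sub (Finset.subset_univ _), hQ4, hsum2, hs1]
          norm_num
        have hsubset : varS X φ ⊆ ({p, q} : Finset X.D) := by
          intro x hx
          by_contra hxm
          have hx0 : (Fd X φ x)^2 = 0 :=
            (Finset.sum_eq_zero_iff_of_nonneg (fun i _ => sq_nonneg _)).mp hrest x
              (Finset.mem_sdiff.mpr ⟨Finset.mem_univ _, hxm⟩)
          exact (Finset.mem_filter.mp hx).2 (by
            have := sq_eq_zero_iff.mp hx0; exact this)
        have := Finset.card_le_card hsubset
        have h2 : ({p, q} : Finset X.D).card ≤ 2 := Finset.card_insert_le _ _ |>.trans (by simp)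
        omega
    · -- generic case : p, inv p, q, inv q pairwise distinct
      have e1 : p ≠ X.inv p := fun h => noSemi X hsimple p h.symm
      have e2 : q ≠ X.inv q := fun h => noSemi X hsimple q h.symm
      have e3 : X.inv p ≠ q := fun h => hpiq (by rw [← h, X.inv_inv])
      have e4 : X.inv p ≠ X.inv q := fun h => hpq (by
        have := congrArg X.inv h; rwa [X.inv_inv, X.inv_inv] at this)
      set s : ℤ := Fd X φ p with hs
      set t : ℤ := Fd X φ q with ht
      have hsum4 : ∑ x ∈ ({p, X.inv p, q, X.inv q} : Finset X.D), (Fd X φ x)^2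
          = 2 * s^2 + 2 * t^2 := by
        rw [Finset.sum_insert (by simp [e1, hpq, hpiq]),
          Finset.sum_insert (by simp [e3, e4]),
          Finset.sum_pair e2, Fd_inv, Fd_inv]
        ring
      have hle : 2 * s^2 + 2 * t^2 ≤ 2 * (s - t) := by
        rw [← hsum4, ← hQ]
        exact Finset.sum_le_sum_of_subset_of_nonneg (Finset.subset_univ _)
          (fun i _ _ => sq_nonneg _)
      have i1 := int_self_le_sq s
      have i2 := int_self_le_sq (-t)
      have i2' : -t ≤ t^2 := by rwa [neg_sq] at i2
      have hseq : s^2 = s := le_antisymm (by linarith) i1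
      have hteq : t^2 = -t := le_antisymm (by linarith) i2'
      have hs01 : s = 0 ∨ s - 1 = 0 := mul_eq_zero.mp (by linear_combination hseq)
      have ht01 : t = 0 ∨ t + 1 = 0 := mul_eq_zero.mp (by linear_combination hteq)
      have hb : s - t ≤ 2 := by rcases hs01 with h | h <;> rcases ht01 with h' | h' <;> omega
      have := card_varS_le X φ 4 (by rw [hQ]; omega)
      omega
  have hM0 := Mop_eq_zero X hsimple h3 φ hcard
  rw [hM0] at hφ
  exact dvec_eq_imp X hsimple p q (sub_eq_zero.mp hφ.symm)

lemma rot_inj {n : ℕ} (hn : 0 < n) :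
    Function.Injective (fun i : Fin n => (⟨(i.1+1) % n, Nat.mod_lt _ hn⟩ : Fin n)) := by
  intro a b h
  have ha := a.2; have hb := b.2
  simp only [Fin.mk.injEq] at h
  apply Fin.ext
  rcases Nat.lt_or_ge (a.1+1) n with h1 | h1 <;> rcases Nat.lt_or_ge (b.1+1) n with h2 | h2
  · rw [Nat.mod_eq_of_lt h1, Nat.mod_eq_of_lt h2] at h; omega
  · have hb2 : b.1 + 1 = n := by omega
    rw [Nat.mod_eq_of_lt h1, hb2, Nat.mod_self] at h; omega
  · have ha2 : a.1 + 1 = n := by omega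
    rw [Nat.mod_eq_of_lt h2, ha2, Nat.mod_self] at h; omega
  · omega

lemma cycle_sum {n : ℕ} (hn : 0 < n) (c : Fin n → X.D) (hc : X.IsCycleVec hn c) :
    ∑ i, dvec X (c i) = 0 := by
  funext u
  rw [Finset.sum_apply]
  have hterm : ∀ i : Fin n, dvec X (c i) u
      = (if u = X.vtx (c i) then (1:ℤ) else 0)
        - (if u = X.vtx (c ⟨(i.1+1) % n, Nat.mod_lt _ hn⟩) then 1 else 0) := by
    intro i
    show (if u = X.vtx (c i) then (1:ℤ) else 0)
        - (if u = X.vtx (X.inv (c i)) then 1 else 0) = _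
    rw [hc.1 i]
  rw [Finset.sum_congr rfl (fun i _ => hterm i), Finset.sum_sub_distrib]
  have h2 : ∑ i : Fin n,
      (if u = X.vtx (c ⟨(i.1+1) % n, Nat.mod_lt _ hn⟩) then (1:ℤ) else 0)
      = ∑ j : Fin n, (if u = X.vtx (c j) then (1:ℤ) else 0) :=
    Function.Bijective.sum_comp
      ((Finite.injective_iff_bijective).mp (rot_inj hn))
      (fun j => if u = X.vtx (c j) then (1:ℤ) else 0)
  rw [h2]
  simp

/-- the subgroup of vertex relations -/
def Nsub : AddSubgroup (X.V → ℤ) := (Mop X).range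

lemma vertexRel_mem (v : X.V) : (∑ x ∈ X.dartsAt v, dvec X x) ∈ Nsub X := by
  refine ⟨Pi.single v 1, ?_⟩
  funext u
  show ∑ x : X.D, (Pi.single v (1:ℤ) : X.V → ℤ) (X.vtx x) * dvec X x u = _
  have hterm : ∀ x : X.D, (Pi.single v (1:ℤ) : X.V → ℤ) (X.vtx x) * dvec X x u
      = if X.vtx x = v then dvec X x u else 0 := by
    intro x; rw [Pi.single_apply]; split_ifs <;> ring
  rw [Finset.sum_congr rfl (fun x _ => hterm x), ← Finset.sum_filter]
  exact (Finset.sum_apply u (X.dartsAt v) (dvec X)).symm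

/-- the homomorphism detecting divergence classes -/
def mu : FreeAbelianGroup X.D →+ (X.V → ℤ) ⧸ Nsub X :=
  (QuotientAddGroup.mk' (Nsub X)).comp (FreeAbelianGroup.lift (dvec X))

lemma jacRels_le_ker : AddSubgroup.closure X.jacRels ≤ (mu X).ker := by
  rw [AddSubgroup.closure_le]
  rintro a ((⟨x, rfl⟩ | ⟨v, rfl⟩) | ⟨n, hn, c, hc, rfl⟩) <;>
    refine AddMonoidHom.mem_ker.mpr ?_
  · simp only [mu, AddMonoidHom.comp_apply, map_add, FreeAbelianGroup.lift_apply_of]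
    rw [dvec_inv]
    simp
  · have hl : FreeAbelianGroup.lift (dvec X) (∑ x ∈ X.dartsAt v, FreeAbelianGroup.of x)
        = ∑ x ∈ X.dartsAt v, dvec X x := by
      rw [map_sum]
      exact Finset.sum_congr rfl (fun x _ => FreeAbelianGroup.lift_apply_of _ _)
    simp only [mu, AddMonoidHom.comp_apply, hl, QuotientAddGroup.mk'_apply]
    exact (QuotientAddGroup.eq_zero_iff _).mpr (vertexRel_mem X v)
  · have hl : FreeAbelianGroup.lift (dvec X) (∑ i, FreeAbelianGroup.of (c i))
        = ∑ i, dvec X (c i) := by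
      rw [map_sum]
      exact Finset.sum_congr rfl (fun x _ => FreeAbelianGroup.lift_apply_of _ _)
    simp only [mu, AddMonoidHom.comp_apply, hl, cycle_sum X hn c hc, map_zero]

end ThetaAux

/-- Let `X` be a simple, connected, 3-edge-connected graph and `G ≤ Aut(X)` a
subgroup acting semiregularly on darts and on vertices. Then the canonical
homomorphism `Θ : Aut(X) → Aut(Jac(X))` (characterized by
`Θ f (jflow x) = jflow (f x)`) restricts to an injection on `G`; in particular
`Θ(G) ≅ G`. -/
theorem theta_injective_on_semiregular (X : Multigraph)
    (hsimple : X.Simple) (hconn : X.Connected) (h3 : X.EdgeConnectedGE 3)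
    (G : Subgroup X.autGroup)
    (hsemiD : ∀ g : G, (∃ x : X.D, (g : Equiv.Perm X.D) x = x) → g = 1)
    (hsemiV : ∀ g : G,
      (∃ x : X.D, X.vtx ((g : Equiv.Perm X.D) x) = X.vtx x) → g = 1)
    (Θ : X.autGroup →* Multiplicative (AddAut X.jac))
    (hΘ : ∀ (f : X.autGroup) (x : X.D), Multiplicative.toAdd (Θ f) (X.jflow x) = X.jflow (f.1 x)) :
    Function.Injective fun g : G => Θ g := by
  intro g1 g2 h
  simp only at h
  set k : G := g1⁻¹ * g2 with hk
  have hck : ((k : X.autGroup)) = (↑g1)⁻¹ * (↑g2 : X.autGroup) := rfl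
  have hTk : Θ ↑k = 1 := by
    rw [hck, map_mul, map_inv, h, inv_mul_cancel]
  obtain ⟨x0⟩ := X.instNonemptyD
  set p : X.D := ((k : X.autGroup) : Equiv.Perm X.D) x0 with hp
  have hjf : X.jflow p = X.jflow x0 := by
    have h1 := hΘ ↑k x0
    rw [hTk, toAdd_one, AddAut.zero_apply] at h1
    exact h1.symm
  have hmem : -(FreeAbelianGroup.of p) + FreeAbelianGroup.of x0
      ∈ AddSubgroup.closure X.jacRels := QuotientAddGroup.eq.mp hjf
  have h0 : ThetaAux.mu X (-(FreeAbelianGroup.of p) + FreeAbelianGroup.of x0) = 0 :=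
    AddMonoidHom.mem_ker.mp (ThetaAux.jacRels_le_ker X hmem)
  have h1 : FreeAbelianGroup.lift (ThetaAux.dvec X)
      (-(FreeAbelianGroup.of p) + FreeAbelianGroup.of x0)
      = ThetaAux.dvec X x0 - ThetaAux.dvec X p := by
    rw [map_add, map_neg, FreeAbelianGroup.lift_apply_of, FreeAbelianGroup.lift_apply_of,
      neg_add_eq_sub]
  rw [ThetaAux.mu, AddMonoidHom.comp_apply, h1, QuotientAddGroup.mk'_apply,
    QuotientAddGroup.eq_zero_iff] at h0
  obtain ⟨φ, hφ⟩ := h0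
  have hxp : x0 = p := ThetaAux.key X hsimple h3 x0 p φ hφ
  have hk1 : k = 1 := hsemiD k ⟨x0, hxp.symm⟩
  have : g1⁻¹ * g2 = 1 := by rw [← hk, hk1]
  exact (inv_mul_eq_one.mp this)
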